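/- For every integer t ≥ 3, Lr(n, B_t) = Θ(n^{3/2}): there exist constants c₁, c₂ > 0 such that c₁·n^{3/2} ≤ Lr(n, B_t) ≤ c₂·n^{3/2} for all sufficiently large n, where B_t = K_2 + tK_1 is the book with t pages. -/

import Mathlib

open SimpleGraph Filter Topology

/-- `H` is contained in `G` as a subgraph (up to isomorphism):
there is an injective map preserving adjacency. -/
def GraphContains {α β : Type} (H : SimpleGraph α) (G : SimpleGraph β) : Prop :=
  ∃ f : α → β, Function.Injective f ∧ ∀ ⦃u v⦄, H.Adj u v → G.Adj (f u) (f v)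

/-- A family of (finite) graphs, given as a predicate on graphs on `Fin k` for every `k`. -/
def GraphFamily : Type :=
  ∀ ⦃k : ℕ⦄, SimpleGraph (Fin k) → Prop

/-- A family is hereditary if it is closed under taking subgraphs (up to isomorphism). -/
def GraphFamily.Hereditary (F : GraphFamily) : Prop :=
  ∀ {a b : ℕ} (H : SimpleGraph (Fin a)) (G : SimpleGraph (Fin b)),
    F G → GraphContains H G → F H

/-- The number of colors an edge coloring `c` uses on the edges of `K_n`. -/
noncomputable def numColors (n : ℕ) (c : Sym2 (Fin n) → ℕ) : ℕ :=
  (c '' {e : Sym2 (Fin n) | ¬ e.IsDiag}).ncard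

/-- Given a copy `φ` of `G` inside `K_n` and an edge coloring `c` of `K_n`,
the color class of color `i` within this copy, as a subgraph of `G`. -/
def colorClass {p n : ℕ} (G : SimpleGraph (Fin p)) (φ : Fin p → Fin n)
    (c : Sym2 (Fin n) → ℕ) (i : ℕ) : SimpleGraph (Fin p) where
  Adj u v := G.Adj u v ∧ c s(φ u, φ v) = i
  symm := by
    constructor
    intro u v ⟨h, hc⟩
    exact ⟨h.symm, by rwa [Sym2.eq_swap]⟩
  loopless := by
    constructor
    intro u ⟨h, _⟩
    exact G.loopless.irrefl u h

/-- The colored `K_n` given by `c` contains a copy of `G` in which every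
(nonempty) color class is a member of the family `F`. -/
def HasFColoredCopy (F : GraphFamily) {p : ℕ} (G : SimpleGraph (Fin p))
    {n : ℕ} (c : Sym2 (Fin n) → ℕ) : Prop :=
  ∃ φ : Fin p → Fin n, Function.Injective φ ∧
    ∀ i : ℕ, (colorClass G φ c i).edgeSet.Nonempty → F (colorClass G φ c i)

/-- `fF F G n` is the smallest `k` such that every edge coloring of `K_n` using at
least `k` colors contains an `F`-colored copy of `G`. -/
noncomputable def fF (F : GraphFamily) {p : ℕ} (G : SimpleGraph (Fin p)) (n : ℕ) : ℕ :=
  sInf {k | ∀ c : Sym2 (Fin n) → ℕ, k ≤ numColors n c → HasFColoredCopy F G c}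

/-- The `F`-deck of `G`: all graphs of the form `G - D` with `D ∈ F` a subgraph of `G`. -/
def deck (F : GraphFamily) {p : ℕ} (G : SimpleGraph (Fin p)) : Set (SimpleGraph (Fin p)) :=
  {H | ∃ D : SimpleGraph (Fin p), D ≤ G ∧ F D ∧ H = G \ D}

/-- The reduced chromatic number of `G` with respect to `F`. -/
noncomputable def chiF (F : GraphFamily) {p : ℕ} (G : SimpleGraph (Fin p)) : ℕ∞ :=
  sInf (SimpleGraph.chromaticNumber '' deck F G)

/-- The Turán number of a single graph `H`: the maximum number of edges of an
`n`-vertex graph containing no copy of `H`. -/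
noncomputable def exNum {a : ℕ} (n : ℕ) (H : SimpleGraph (Fin a)) : ℕ :=
  sSup {e | ∃ G : SimpleGraph (Fin n), ¬ GraphContains H G ∧ e = G.edgeSet.ncard}

/-- The Turán number of a family `𝓗` of graphs. -/
noncomputable def exNumFam {a : ℕ} (n : ℕ) (𝓗 : Set (SimpleGraph (Fin a))) : ℕ :=
  sSup {e | ∃ G : SimpleGraph (Fin n), (∀ H ∈ 𝓗, ¬ GraphContains H G) ∧ e = G.edgeSet.ncard}

/-- The family of matchings: graphs in which every vertex has at most one neighbor. -/
def matchingFamily : GraphFamily := fun {_} H =>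
  ∀ v u w, H.Adj v u → H.Adj v w → u = w

/-- The book with `t` pages, `B_t = K_2 + tK_1`: vertices `0` and `1` form an edge
joined to an independent set of `t` further vertices. -/
def book (t : ℕ) : SimpleGraph (Fin (t + 2)) where
  Adj x y := x ≠ y ∧ ((x : ℕ) < 2 ∨ (y : ℕ) < 2)
  symm := by
    constructor
    intro x y ⟨hne, h⟩
    exact ⟨hne.symm, by tauto⟩
  loopless := by
    constructor
    intro x ⟨hne, _⟩
    exact hne rfl

/-!
The upper bound comes from a rainbow subgraph `R`: keep one edge of each color. Once `R` has
more than about `t n^{3/2}` edges, counting paths of length two (Cauchy–Schwarz on the degrees)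
gives two vertices `u, v` with more than `t` common neighbours `w`. Since `R` is rainbow, at most
one `w` has an edge `uw` or `vw` of the color of `uv`; the other pages give a book in which all
edges have distinct colors.

For the lower bound, take the point–line incidence graph `H` of the affine plane over `𝔽_q`
(`2q²` vertices, `q³` edges, no triangle and no `C₄`), give its edges distinct colors and all other
edges the color `0`. In a properly colored book the non-`H` edges form a matching. If the spine is
an edge of `H`, each page misses `H` at one of the two spine vertices (no triangle), and each spine
vertex is missed by at most one page, which is impossible for three pages. If it is not, every
page edge lies in `H`, and two pages form a `C₄`.
-/

open Finset

namespace SimpleGraph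

variable {V : Type*} [Fintype V] [DecidableEq V] (G : SimpleGraph V) [DecidableRel G.Adj]

theorem sum_sum_card_inter_neighborFinset :
    ∑ u, ∑ v, #(G.neighborFinset u ∩ G.neighborFinset v) = ∑ w, G.degree w ^ 2 := by
  let a u w : ℕ := if G.Adj u w then 1 else 0
  have hcard u v : #(G.neighborFinset u ∩ G.neighborFinset v) = ∑ w, a u w * a v w := by
    simp_rw [a, ite_zero_mul_ite_zero, mul_one, ← card_filter]
    congr 1; ext; simp
  have hdeg w : ∑ u, a u w = G.degree w := by
    simp_rw [a, ← card_filter, ← card_neighborFinset_eq_degree]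
    congr 1; ext; simp [adj_comm]
  calc ∑ u, ∑ v, #(G.neighborFinset u ∩ G.neighborFinset v)
      = ∑ u, ∑ w, ∑ v, a u w * a v w := by
        simp_rw [hcard]; exact sum_congr rfl fun u _ => sum_comm
    _ = ∑ w, (∑ u, a u w) * ∑ v, a v w := by rw [sum_comm]; simp_rw [sum_mul_sum]
    _ = ∑ w, G.degree w ^ 2 := by simp_rw [hdeg, sq]

theorem sum_degree_sq_le_of_card_inter_le {t : ℕ}
    (h : ∀ u v, u ≠ v → #(G.neighborFinset u ∩ G.neighborFinset v) ≤ t) :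
    ∑ w, G.degree w ^ 2 ≤ 2 * #G.edgeFinset + t * Fintype.card V ^ 2 := by
  have hrow u :
      ∑ v, #(G.neighborFinset u ∩ G.neighborFinset v) ≤ G.degree u + t * Fintype.card V := by
    rw [← add_sum_erase _ _ (mem_univ u), inter_self, card_neighborFinset_eq_degree]
    gcongr
    calc ∑ v ∈ univ.erase u, #(G.neighborFinset u ∩ G.neighborFinset v)
        ≤ ∑ _v ∈ univ.erase u, t := sum_le_sum fun v hv => h u v (ne_of_mem_erase hv).symm
      _ ≤ t * Fintype.card V := by
        rw [sum_const, smul_eq_mul, mul_comm, ← card_univ]; gcongr; exact erase_subset _ _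
  calc ∑ w, G.degree w ^ 2 = ∑ u, ∑ v, #(G.neighborFinset u ∩ G.neighborFinset v) :=
        (G.sum_sum_card_inter_neighborFinset).symm
    _ ≤ ∑ u, (G.degree u + t * Fintype.card V) := sum_le_sum fun u _ => hrow u
    _ = 2 * #G.edgeFinset + t * Fintype.card V ^ 2 := by
        rw [sum_add_distrib, sum_degrees_eq_twice_card_edges, sum_const, card_univ, smul_eq_mul]
        ring

theorem exists_lt_card_inter_neighborFinset {t : ℕ}
    (h : (t + 1) * Fintype.card V * (Nat.sqrt (Fintype.card V) + 1) < #G.edgeFinset) :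
    ∃ u v, u ≠ v ∧ t < #(G.neighborFinset u ∩ G.neighborFinset v) := by
  by_contra! hle
  set n := Fintype.card V
  set e := #G.edgeFinset
  have hcs : (2 * e) ^ 2 ≤ n * (2 * e + t * n ^ 2) := by
    calc (2 * e) ^ 2 = (∑ w, G.degree w) ^ 2 := by rw [sum_degrees_eq_twice_card_edges]
      _ ≤ n * ∑ w, G.degree w ^ 2 := sq_sum_le_card_mul_sum_sq
      _ ≤ n * (2 * e + t * n ^ 2) := by gcongr; exact G.sum_degree_sq_le_of_card_inter_le hle
  set s := Nat.sqrt n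
  have hn : n ≤ (s + 1) ^ 2 := by rw [sq]; exact (Nat.lt_succ_sqrt n).le
  have hne : n ≤ e := calc
    n = 1 * n * 1 := by ring
    _ ≤ (t + 1) * n * (s + 1) := by gcongr <;> omega
    _ ≤ e := h.le
  have hcube : t * n ^ 3 ≤ ((t + 1) * n * (s + 1)) ^ 2 := calc
    t * n ^ 3 = t * n ^ 2 * n := by ring
    _ ≤ (t + 1) ^ 2 * n ^ 2 * (s + 1) ^ 2 := by gcongr; nlinarith
    _ = ((t + 1) * n * (s + 1)) ^ 2 := by ring
  have hsq := Nat.pow_lt_pow_left h two_ne_zero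
  nlinarith

theorem subsingleton_commonNeighbors_map {V W : Type*} {G : SimpleGraph V} (f : V ↪ W)
    (hG : ∀ a b, a ≠ b → (G.commonNeighbors a b).Subsingleton) {a b : W} (hab : a ≠ b) :
    ((G.map f).commonNeighbors a b).Subsingleton := by
  rintro d ⟨had, hbd⟩ d' ⟨had', hbd'⟩
  simp only [mem_neighborSet, map_adj] at had hbd had' hbd'
  obtain ⟨x, z, hxz, rfl, rfl⟩ := had
  obtain ⟨y, z₁, hyz, rfl, hz₁⟩ := hbd
  obtain ⟨x₁, z', hxz', hx₁, rfl⟩ := had'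
  obtain ⟨y₁, z'₁, hyz', hy₁, hz'₁⟩ := hbd'
  rw [f.injective hz₁] at hyz
  rw [f.injective hx₁] at hxz'
  rw [f.injective hy₁, f.injective hz'₁] at hyz'
  exact congrArg f (hG x y (ne_of_apply_ne f hab) ⟨hxz, hyz⟩ ⟨hxz', hyz'⟩)

end SimpleGraph

/-- `inl (x, y)` is the point `(x, y)` and `inr (m, b)` the line `y = m * x + b`. -/
def affineIncidence (F : Type*) [CommRing F] : SimpleGraph ((F × F) ⊕ (F × F)) where
  Adj a b := match a, b with
    | .inl p, .inr l | .inr l, .inl p => p.2 = l.1 * p.1 + l.2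
    | _, _ => False
  symm := ⟨by rintro (_ | _) (_ | _) h <;> exact h⟩
  loopless := ⟨by rintro (_ | _) h <;> exact h⟩

namespace affineIncidence

variable {F : Type*} [CommRing F]

@[simp] theorem adj_inl_inr {p l : F × F} :
    (affineIncidence F).Adj (.inl p) (.inr l) ↔ p.2 = l.1 * p.1 + l.2 := Iff.rfl

@[simp] theorem adj_inr_inl {p l : F × F} :
    (affineIncidence F).Adj (.inr l) (.inl p) ↔ p.2 = l.1 * p.1 + l.2 := Iff.rfl

@[simp] theorem not_adj_inl_inl {p p' : F × F} : ¬ (affineIncidence F).Adj (.inl p) (.inl p') :=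
  id

@[simp] theorem not_adj_inr_inr {l l' : F × F} : ¬ (affineIncidence F).Adj (.inr l) (.inr l') :=
  id

theorem cliqueFree_three : (affineIncidence F).CliqueFree 3 :=
  Colorable.cliqueFree
    (Coloring.mk (fun a => a.isLeft) (by rintro (_ | _) (_ | _) h <;> simp_all)).colorable
    (by simp)

theorem eq_or_eq_of_incident [NoZeroDivisors F] {p p' l l' : F × F}
    (h₁ : p.2 = l.1 * p.1 + l.2) (h₂ : p'.2 = l.1 * p'.1 + l.2)
    (h₃ : p.2 = l'.1 * p.1 + l'.2) (h₄ : p'.2 = l'.1 * p'.1 + l'.2) : p = p' ∨ l = l' := by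
  obtain ⟨x, y⟩ := p; obtain ⟨x', y'⟩ := p'; obtain ⟨m, b⟩ := l; obtain ⟨m', b'⟩ := l'
  dsimp only at *
  by_cases hm : m = m'
  · subst hm
    exact .inr (by rw [show b = b' by linear_combination h₃ - h₁])
  · have hx : x = x' := by
      have : (m - m') * (x - x') = 0 := by linear_combination h₂ - h₁ + h₃ - h₄
      exact sub_eq_zero.1 ((mul_eq_zero.1 this).resolve_left (sub_ne_zero.2 hm))
    subst hx
    exact .inl (by rw [show y = y' by linear_combination h₁ - h₂])

theorem subsingleton_commonNeighbors [NoZeroDivisors F] {a b : (F × F) ⊕ (F × F)} (hab : a ≠ b) :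
    ((affineIncidence F).commonNeighbors a b).Subsingleton := by
  rintro d ⟨had, hbd⟩ d' ⟨had', hbd'⟩
  simp only [mem_neighborSet] at *
  rcases a with p | l <;> rcases b with p' | l' <;> rcases d with p'' | l'' <;>
    rcases d' with p''' | l''' <;>
    simp only [adj_inl_inr, adj_inr_inl, not_adj_inl_inl, not_adj_inr_inr] at *
  · exact congrArg _ ((eq_or_eq_of_incident had hbd had' hbd').resolve_left (hab ∘ congrArg _))
  · exact congrArg _ ((eq_or_eq_of_incident had had' hbd hbd').resolve_right (hab ∘ congrArg _))

theorem card_pow_three_le_ncard_edgeSet [Fintype F] :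
    Fintype.card F ^ 3 ≤ (affineIncidence F).edgeSet.ncard := by
  let ψ : F × F × F → Sym2 ((F × F) ⊕ (F × F)) :=
    fun ⟨x, m, b⟩ => s(.inl (x, m * x + b), .inr (m, b))
  have hψ : Function.Injective ψ := by
    rintro ⟨x, m, b⟩ ⟨x', m', b'⟩ h
    simp_all [ψ]
  have hψE : Set.range ψ ⊆ (affineIncidence F).edgeSet := by
    rintro _ ⟨⟨x, m, b⟩, rfl⟩
    simp [ψ]
  calc Fintype.card F ^ 3 = (Set.range ψ).ncard := by
        rw [Set.ncard_range_of_injective hψ, Nat.card_eq_fintype_card]; simp [pow_three]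
    _ ≤ _ := Set.ncard_le_ncard hψE (Set.toFinite _)

end affineIncidence

theorem fF_le_of_forall {F : GraphFamily} {p n k : ℕ} {G : SimpleGraph (Fin p)}
    (h : ∀ c : Sym2 (Fin n) → ℕ, k ≤ numColors n c → HasFColoredCopy F G c) : fF F G n ≤ k :=
  Nat.sInf_le h

theorem numColors_lt_fF {F : GraphFamily} {p n : ℕ} {G : SimpleGraph (Fin p)}
    (hbdd : ∃ k, ∀ c : Sym2 (Fin n) → ℕ, k ≤ numColors n c → HasFColoredCopy F G c)
    {c : Sym2 (Fin n) → ℕ} (hc : ¬ HasFColoredCopy F G c) : numColors n c < fF F G n :=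
  le_csInf hbdd fun _ hk => not_le.1 fun hle => hc (hk c hle)

theorem exists_injOn_ncard_edgeSet_eq_numColors {n : ℕ} (c : Sym2 (Fin n) → ℕ) :
    ∃ R : SimpleGraph (Fin n), Set.InjOn c R.edgeSet ∧ R.edgeSet.ncard = numColors n c := by
  obtain ⟨s, hs, hbij⟩ := Set.exists_subset_bijOn {e : Sym2 (Fin n) | ¬ e.IsDiag} c
  have hedge : (fromEdgeSet s).edgeSet = s := by
    rw [edgeSet_fromEdgeSet, sdiff_eq_left, Set.disjoint_left]
    exact fun e he hdiag => hs he hdiag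
  refine ⟨fromEdgeSet s, by rw [hedge]; exact hbij.injOn, ?_⟩
  rw [hedge, numColors, ← hbij.image_eq, hbij.injOn.ncard_image]

theorem exists_eq_zero_iff_notMem_and_injOn {α : Type*} [Countable α] (s : Set α) :
    ∃ c : α → ℕ, (∀ e, c e = 0 ↔ e ∉ s) ∧ Set.InjOn c s := by
  classical
  obtain ⟨f, hf⟩ := Countable.exists_injective_nat α
  refine ⟨fun e => if e ∈ s then f e + 1 else 0, fun e => by by_cases he : e ∈ s <;> simp [he],
    fun e he e' he' h => hf ?_⟩
  simpa [he, he'] using h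

theorem ncard_edgeSet_le_numColors {n : ℕ} (H : SimpleGraph (Fin n)) {c : Sym2 (Fin n) → ℕ}
    (hc : Set.InjOn c H.edgeSet) : H.edgeSet.ncard ≤ numColors n c := by
  rw [numColors, ← hc.ncard_image]
  exact Set.ncard_le_ncard (Set.image_mono fun e he => H.not_isDiag_of_mem_edgeSet he)
    (Set.toFinite _)

theorem matchingFamily_colorClass_of_injOn {p n : ℕ} {G : SimpleGraph (Fin p)}
    {φ : Fin p → Fin n} {c : Sym2 (Fin n) → ℕ}
    (hc : Set.InjOn (fun e => c (e.map φ)) G.edgeSet) (i : ℕ) :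
    matchingFamily (colorClass G φ c i) := by
  rintro a b b' ⟨hab, rfl⟩ ⟨hab', hi⟩
  exact Sym2.congr_right.1 (hc hab hab' hi.symm)

theorem injOn_map_of_forall_ne {α V : Type*} {G : SimpleGraph α} {R : SimpleGraph V}
    {φ : α → V} (hφ : Function.Injective φ) {c : Sym2 V → ℕ} (hc : Set.InjOn c R.edgeSet)
    (e₀ : Sym2 α)
    (h : ∀ e ∈ G.edgeSet, e ≠ e₀ → e.map φ ∈ R.edgeSet ∧ c (e.map φ) ≠ c (e₀.map φ)) :
    Set.InjOn (fun e => c (e.map φ)) G.edgeSet := by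
  intro e he e' he' hcol
  by_cases h₀ : e = e₀ <;> by_cases h₀' : e' = e₀
  · rw [h₀, h₀']
  · exact absurd (h₀ ▸ hcol).symm (h e' he' h₀').2
  · exact absurd (h₀' ▸ hcol) (h e he h₀).2
  · exact Sym2.map.injective hφ (hc (h e he h₀).1 (h e' he' h₀').1 hcol)

theorem book_vertex_cases {t : ℕ} (x : Fin (t + 2)) :
    x = 0 ∨ x = 1 ∨ ∃ j : Fin t, x = j.succ.succ := by
  rcases Fin.eq_zero_or_eq_succ x with rfl | ⟨y, rfl⟩
  · exact Or.inl rfl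
  rcases Fin.eq_zero_or_eq_succ y with rfl | ⟨j, rfl⟩
  · exact Or.inr (Or.inl rfl)
  · exact Or.inr (Or.inr ⟨j, rfl⟩)

theorem book_adj_cases {t : ℕ} {x y : Fin (t + 2)} (h : (book t).Adj x y) :
    s(x, y) = s(0, 1) ∨ ∃ j : Fin t, s(x, y) = s(0, j.succ.succ) ∨ s(x, y) = s(1, j.succ.succ) := by
  obtain ⟨hne, hlt⟩ := h
  rcases book_vertex_cases x with rfl | rfl | ⟨i, rfl⟩ <;>
    rcases book_vertex_cases y with rfl | rfl | ⟨j, rfl⟩ <;>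
    simp_all [Sym2.eq_swap (a := Fin.succ _)]

theorem book_adj_zero_one (t : ℕ) : (book t).Adj 0 1 := by simp [book]

theorem book_adj_of_hub {t : ℕ} {h : Fin (t + 2)} (hh : h = 0 ∨ h = 1) (j : Fin t) :
    (book t).Adj h j.succ.succ := by
  rcases hh with rfl | rfl <;> simp [book, Fin.ext_iff]

theorem card_filter_color_eq_le_one {n : ℕ} {c : Sym2 (Fin n) → ℕ} {R : SimpleGraph (Fin n)}
    [DecidableRel R.Adj] (hc : Set.InjOn c R.edgeSet) (u v : Fin n) (k : ℕ) :
    #((R.neighborFinset u ∩ R.neighborFinset v).filter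
      fun w => c s(u, w) = k ∨ c s(v, w) = k) ≤ 1 := by
  refine card_le_one.2 fun w hw w' hw' => ?_
  simp only [mem_filter, mem_inter, mem_neighborFinset] at hw hw'
  have hedge : ∃ x, (x = u ∨ x = v) ∧ s(x, w) ∈ R.edgeSet ∧ c s(x, w) = k := by
    rcases hw with ⟨⟨hu, hv⟩, hk | hk⟩
    exacts [⟨u, .inl rfl, hu, hk⟩, ⟨v, .inr rfl, hv, hk⟩]
  have hedge' : ∃ x, s(x, w') ∈ R.edgeSet ∧ c s(x, w') = k := by
    rcases hw' with ⟨⟨hu, hv⟩, hk | hk⟩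
    exacts [⟨u, hu, hk⟩, ⟨v, hv, hk⟩]
  obtain ⟨x, hx, hxw, hxk⟩ := hedge
  obtain ⟨x', hxw', hxk'⟩ := hedge'
  rcases Sym2.eq_iff.1 (hc hxw hxw' (hxk.trans hxk'.symm)) with ⟨_, h⟩ | ⟨rfl, -⟩
  · exact h
  · rcases hx with rfl | rfl
    exacts [(R.loopless.irrefl _ hw'.1.1).elim, (R.loopless.irrefl _ hw'.1.2).elim]

theorem exists_rainbow_pages {t n : ℕ} {c : Sym2 (Fin n) → ℕ} {R : SimpleGraph (Fin n)}
    [DecidableRel R.Adj] (hc : Set.InjOn c R.edgeSet) {u v : Fin n}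
    (h : t < #(R.neighborFinset u ∩ R.neighborFinset v)) :
    ∃ p : Fin t → Fin n, Function.Injective p ∧ ∀ j, R.Adj u (p j) ∧ R.Adj v (p j) ∧
      c s(u, p j) ≠ c s(u, v) ∧ c s(v, p j) ≠ c s(u, v) := by
  have hbad := card_filter_color_eq_le_one hc u v (c s(u, v))
  set W := R.neighborFinset u ∩ R.neighborFinset v
  have hgood : t ≤ #(W.filter fun w => ¬ (c s(u, w) = c s(u, v) ∨ c s(v, w) = c s(u, v))) := by
    have := card_filter_add_card_filter_not (s := W)
      fun w => c s(u, w) = c s(u, v) ∨ c s(v, w) = c s(u, v)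
    omega
  obtain ⟨P, hPgood, hP⟩ := exists_subset_card_eq hgood
  refine ⟨P.orderEmbOfFin hP, (P.orderEmbOfFin hP).injective, fun j => ?_⟩
  have hj := hPgood (P.orderEmbOfFin_mem hP j)
  simp only [W, mem_filter, mem_inter, mem_neighborFinset, not_or] at hj
  exact ⟨hj.1.1, hj.1.2, hj.2⟩

theorem hasFColoredCopy_book_of_pages {t n : ℕ} {c : Sym2 (Fin n) → ℕ} {R : SimpleGraph (Fin n)}
    (hc : Set.InjOn c R.edgeSet) {u v : Fin n} (huv : u ≠ v) (p : Fin t → Fin n)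
    (hp : Function.Injective p)
    (hpages : ∀ j, R.Adj u (p j) ∧ R.Adj v (p j) ∧
      c s(u, p j) ≠ c s(u, v) ∧ c s(v, p j) ≠ c s(u, v)) :
    HasFColoredCopy matchingFamily (book t) c := by
  let φ : Fin (t + 2) → Fin n := Fin.cons u (Fin.cons v p)
  have hφ : Function.Injective φ := by
    simp only [φ, Fin.cons_injective_iff, Fin.range_cons, Set.mem_insert_iff, Set.mem_range,
      not_or, not_exists]
    exact ⟨⟨huv, fun j h => (hpages j).1.ne h.symm⟩, fun j h => (hpages j).2.1.ne h.symm, hp⟩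
  refine ⟨φ, hφ, fun i _ => matchingFamily_colorClass_of_injOn
    (injOn_map_of_forall_ne hφ hc s(0, 1) fun e he he₀ => ?_) i⟩
  induction e using Sym2.ind with | _ x y => ?_
  rcases book_adj_cases he with h | ⟨j, h | h⟩
  · exact absurd h he₀
  all_goals
    rw [h]
    simp only [Sym2.map_mk, φ, Fin.cons_zero, Fin.cons_one, Fin.cons_succ, mem_edgeSet]
  · exact ⟨(hpages j).1, (hpages j).2.2.1⟩
  · exact ⟨(hpages j).2.1, (hpages j).2.2.2⟩

theorem hasFColoredCopy_book_of_lt_numColors {t n : ℕ} (c : Sym2 (Fin n) → ℕ)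
    (h : (t + 1) * n * (Nat.sqrt n + 1) < numColors n c) :
    HasFColoredCopy matchingFamily (book t) c := by
  classical
  obtain ⟨R, hc, hR⟩ := exists_injOn_ncard_edgeSet_eq_numColors c
  rw [← R.coe_edgeFinset, Set.ncard_coe_finset] at hR
  obtain ⟨u, v, huv, hcodeg⟩ := R.exists_lt_card_inter_neighborFinset (t := t)
    (by rwa [Fintype.card_fin, hR])
  obtain ⟨p, hp, hpages⟩ := exists_rainbow_pages hc hcodeg
  exact hasFColoredCopy_book_of_pages hc huv p hp hpages

theorem fF_book_le (t n : ℕ) :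
    fF matchingFamily (book t) n ≤ (t + 1) * n * (Nat.sqrt n + 1) + 1 :=
  fF_le_of_forall fun c hc => hasFColoredCopy_book_of_lt_numColors c hc

theorem not_hasFColoredCopy_book {t n : ℕ} (ht : 3 ≤ t) {H : SimpleGraph (Fin n)}
    (hH : H.CliqueFree 3) (hC4 : ∀ a b, a ≠ b → (H.commonNeighbors a b).Subsingleton)
    {c : Sym2 (Fin n) → ℕ} (hc : ∀ e, c e = 0 ↔ e ∉ H.edgeSet) :
    ¬ HasFColoredCopy matchingFamily (book t) c := by
  rintro ⟨φ, hφ, hmatch⟩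
  have hunique ⦃x y y'⦄ (hy : (book t).Adj x y) (hy' : (book t).Adj x y')
      (hny : ¬ H.Adj (φ x) (φ y)) (hny' : ¬ H.Adj (φ x) (φ y')) : y = y' :=
    hmatch 0 ⟨s(x, y), hy, (hc _).2 hny⟩ x y y' ⟨hy, (hc _).2 hny⟩ ⟨hy', (hc _).2 hny'⟩
  by_cases h01 : H.Adj (φ 0) (φ 1)
  · have hmiss (j : Fin t) :
        ∃ h : Fin (t + 2), (h = 0 ∨ h = 1) ∧ ¬ H.Adj (φ h) (φ j.succ.succ) := by
      by_contra! hall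
      exact hH _ (is3Clique_triple_iff.2 ⟨h01, hall 0 (.inl rfl), hall 1 (.inr rfl)⟩)
    choose hub hhub hmiss using hmiss
    obtain ⟨i, -, j, -, hij, hsame⟩ := exists_ne_map_eq_of_card_lt_of_maps_to
      (s := univ) (t := {0, 1}) (f := hub) (by simp; omega) (fun j _ => by simpa using hhub j)
    refine hij (Fin.succ_injective _ (Fin.succ_injective _ ?_))
    exact hunique (book_adj_of_hub (hhub i) i) (hsame ▸ book_adj_of_hub (hhub j) j) (hmiss i)
      (hsame ▸ hmiss j)
  · have hall (j : Fin t) : H.Adj (φ 0) (φ j.succ.succ) ∧ H.Adj (φ 1) (φ j.succ.succ) := by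
      constructor <;> by_contra hn
      · exact Fin.succ_succ_ne_one j
          (hunique (book_adj_of_hub (.inl rfl) j) (book_adj_zero_one t) hn h01)
      · exact Fin.succ_ne_zero _
          (hunique (book_adj_of_hub (.inr rfl) j) (book_adj_zero_one t).symm hn (h01 ·.symm))
    have hpage := hφ (hC4 (φ 0) (φ 1) (hφ.ne zero_ne_one) (hall ⟨0, by omega⟩) (hall ⟨1, by omega⟩))
    simp [Fin.ext_iff] at hpage

theorem card_pow_three_lt_fF_book {F : Type*} [Field F] [Fintype F] {t n : ℕ} (ht : 3 ≤ t)
    (hn : 2 * Fintype.card F ^ 2 ≤ n) :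
    Fintype.card F ^ 3 < fF matchingFamily (book t) n := by
  obtain ⟨f⟩ : Nonempty ((F × F) ⊕ (F × F) ↪ Fin n) :=
    Function.Embedding.nonempty_of_card_le (by simp [Fintype.card_sum]; linarith)
  set H := (affineIncidence F).map f
  obtain ⟨c, hc, hcinj⟩ := exists_eq_zero_iff_notMem_and_injOn H.edgeSet
  have hcolors : Fintype.card F ^ 3 ≤ numColors n c := calc
    _ ≤ (affineIncidence F).edgeSet.ncard := affineIncidence.card_pow_three_le_ncard_edgeSet
    _ = H.edgeSet.ncard := by
      rw [edgeSet_map, f.sym2Map.injective.injOn.ncard_image]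
    _ ≤ numColors n c := ncard_edgeSet_le_numColors H hcinj
  refine hcolors.trans_lt
    (numColors_lt_fF ⟨_, fun c hc => hasFColoredCopy_book_of_lt_numColors c hc⟩ ?_)
  exact not_hasFColoredCopy_book ht (cliqueFree_map_iff.2 affineIncidence.cliqueFree_three)
    (fun _ _ => subsingleton_commonNeighbors_map f
      (fun _ _ => affineIncidence.subsingleton_commonNeighbors)) hc

theorem exists_prime_two_mul_sq_le_le_sixteen_mul_sq {n : ℕ} (hn : 8 ≤ n) :
    ∃ q, q.Prime ∧ 2 * q ^ 2 ≤ n ∧ n ≤ 16 * q ^ 2 := by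
  set m := Nat.sqrt (n / 8)
  have hm : 1 ≤ m := Nat.le_sqrt.2 (by omega)
  obtain ⟨q, hq, hmq, hqm⟩ := Nat.exists_prime_lt_and_le_two_mul m (by omega)
  have hlo : m * m ≤ n / 8 := Nat.sqrt_le _
  have hhi : n / 8 < (m + 1) * (m + 1) := Nat.lt_succ_sqrt _
  refine ⟨q, hq, ?_, ?_⟩
  · nlinarith [Nat.div_mul_le_self n 8]
  · nlinarith [Nat.lt_div_mul_add (a := n) (show 0 < 8 by norm_num)]

theorem natCast_rpow_three_halves (n : ℕ) : (n : ℝ) ^ ((3 : ℝ) / 2) = √n ^ 3 := by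
  rw [Real.rpow_div_two_eq_sqrt _ n.cast_nonneg]
  norm_cast

theorem fF_book_le_rpow (t : ℕ) {n : ℕ} (hn : 1 ≤ n) :
    (fF matchingFamily (book t) n : ℝ) ≤ (2 * t + 3) * (n : ℝ) ^ ((3 : ℝ) / 2) := by
  have hx : (1 : ℝ) ≤ √n := Real.one_le_sqrt.2 (by exact_mod_cast hn)
  have hs : (Nat.sqrt n : ℝ) ≤ √n := Real.nat_sqrt_le_real_sqrt
  have hsq : (n : ℝ) = √n ^ 2 := (Real.sq_sqrt n.cast_nonneg).symm
  set x := √(n : ℝ)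
  calc (fF matchingFamily (book t) n : ℝ) ≤ ((t + 1) * n * (Nat.sqrt n + 1) + 1 : ℕ) := by
        exact_mod_cast fF_book_le t n
    _ = (t + 1) * x ^ 2 * (Nat.sqrt n + 1) + 1 := by push_cast; rw [hsq]
    _ ≤ (t + 1) * x ^ 2 * (x + x) + x ^ 3 := by gcongr; exact one_le_pow₀ hx
    _ = (2 * t + 3) * x ^ 3 := by ring
    _ = _ := by rw [natCast_rpow_three_halves]

theorem rpow_le_fF_book {t n : ℕ} (ht : 3 ≤ t) (hn : 8 ≤ n) :
    1 / 64 * (n : ℝ) ^ ((3 : ℝ) / 2) ≤ fF matchingFamily (book t) n := by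
  obtain ⟨q, hq, hq2, hq16⟩ := exists_prime_two_mul_sq_le_le_sixteen_mul_sq hn
  have : Fact q.Prime := ⟨hq⟩
  have hlt := card_pow_three_lt_fF_book (F := ZMod q) (n := n) ht (by rwa [ZMod.card])
  rw [ZMod.card] at hlt
  have hsqrt : √n ≤ 4 * q :=
    Real.sqrt_le_iff.2 ⟨by positivity, by exact_mod_cast (show n ≤ (4 * q) ^ 2 by linarith)⟩
  calc 1 / 64 * (n : ℝ) ^ ((3 : ℝ) / 2) = 1 / 64 * √n ^ 3 := by rw [natCast_rpow_three_halves]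
    _ ≤ 1 / 64 * (4 * q) ^ 3 := by gcongr
    _ = (q ^ 3 : ℕ) := by push_cast; ring
    _ ≤ fF matchingFamily (book t) n := by exact_mod_cast hlt.le

/-- books: for every `t ≥ 3`, `Lr(n, B_t) = Θ(n^{3/2})`. -/
theorem local_antiRamsey_book (t : ℕ) (ht : 3 ≤ t) :
    ∃ c₁ c₂ : ℝ, 0 < c₁ ∧ 0 < c₂ ∧ ∃ N : ℕ, ∀ n : ℕ, N ≤ n →
      c₁ * (n : ℝ) ^ ((3 : ℝ) / 2) ≤ (fF matchingFamily (book t) n : ℝ) ∧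
      (fF matchingFamily (book t) n : ℝ) ≤ c₂ * (n : ℝ) ^ ((3 : ℝ) / 2) :=
  ⟨1 / 64, 2 * t + 3, by norm_num, by positivity, 8, fun _ hn =>
    ⟨rpow_le_fF_book ht hn, fF_book_le_rpow t (by omega)⟩⟩
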